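/- arXiv:0905.4562 — 3 statements merged into one kernel-verified Lean document; each statement's English description precedes it below -/
import Mathlib

section
/- Let z be a 1-cocycle on a pathwise connected poset P valued in unitaries on a Hilbert space. Then: (i) if paths p and q with the same endpoints are homotopic, z(p) = z(q), where z evaluated on a path is the ordered product of z on its 1-simplices; (ii) z(b(a)) = 1 for every degenerate 1-simplex b(a); (iii) z(p̄) = z(p)* for every path p, where p̄ is the reversed path. -/
/-- A (singular) 1-simplex in a poset `P`. -/
structure OneSimplex (P : Type*) [PartialOrder P] where
  supp : P
  e0 : P
  e1 : P
  h0 : e0 ≤ supp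
  h1 : e1 ≤ supp

/-- The 1-simplex degenerate to a 0-simplex `a`. -/
def degenSimplex {P : Type*} [PartialOrder P] (a : P) : OneSimplex P :=
  ⟨a, a, a, le_refl a, le_refl a⟩

/-- The reverse of a 1-simplex: same support, swapped endpoints. -/
def revSimplex {P : Type*} [PartialOrder P] (b : OneSimplex P) : OneSimplex P :=
  ⟨b.supp, b.e1, b.e0, b.h1, b.h0⟩

/-- A 2-simplex in a poset `P`. -/
structure TwoSimplex (P : Type*) [PartialOrder P] where
  supp : P
  d0 : OneSimplex P
  d1 : OneSimplex P
  d2 : OneSimplex P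
  hs0 : d0.supp ≤ supp
  hs1 : d1.supp ≤ supp
  hs2 : d2.supp ≤ supp
  f11 : d2.e1 = d1.e1
  f10 : d2.e0 = d0.e1
  f00 : d0.e0 = d1.e0

/-- `IsPath a₀ p a₁` : the list of 1-simplices `p` (last 1-simplex at the head)
is a path from `a₀` to `a₁`. -/
inductive IsPath {P : Type*} [PartialOrder P] : P → List (OneSimplex P) → P → Prop
  | single (b : OneSimplex P) : IsPath b.e1 [b] b.e0
  | cons (b : OneSimplex P) {l : List (OneSimplex P)} {a₀ : P}
      (h : IsPath a₀ l b.e1) : IsPath a₀ (b :: l) b.e0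

/-- The reverse of a path: reverse the order and each 1-simplex. -/
def revPath {P : Type*} [PartialOrder P] (p : List (OneSimplex P)) :
    List (OneSimplex P) :=
  (p.map revSimplex).reverse

/-- Homotopy of paths: generated by replacing the composite side `∂₁c` of a
2-simplex `c` by the pair `∂₀c, ∂₂c`. -/
inductive Homotopic {P : Type*} [PartialOrder P] :
    List (OneSimplex P) → List (OneSimplex P) → Prop
  | refl (p : List (OneSimplex P)) : Homotopic p p
  | symm {p q} : Homotopic p q → Homotopic q p
  | trans {p q r} : Homotopic p q → Homotopic q r → Homotopic p r
  | deform (c : TwoSimplex P) (l r : List (OneSimplex P)) :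
      Homotopic (l ++ [c.d1] ++ r) (l ++ [c.d0, c.d2] ++ r)

/-- Evaluation of a 1-cocycle on a path `p = {bₙ, …, b₁}`:
`z(p) = z(bₙ) ⋯ z(b₁)`. -/
def zEval {P : Type*} [PartialOrder P] {H : Type*} [NormedAddCommGroup H]
    [InnerProductSpace ℂ H] (z : OneSimplex P → (H →L[ℂ] H))
    (p : List (OneSimplex P)) : H →L[ℂ] H :=
  (p.map z).prod

/-- For a unitary 1-cocycle `z` on a pathwise connected poset:
(i) `z` takes equal values on homotopic paths with the same endpoints;
(ii) `z(b(a)) = 1` on degenerate 1-simplices;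
(iii) `z(p̄) = z(p)*` on reversed paths. -/
theorem cocycle_path_properties
    {P : Type*} [PartialOrder P]
    {H : Type*} [NormedAddCommGroup H] [InnerProductSpace ℂ H] [CompleteSpace H]
    (hconn : ∀ a₀ a₁ : P, ∃ p : List (OneSimplex P), IsPath a₀ p a₁)
    (z : OneSimplex P → (H →L[ℂ] H))
    (hz_unitary : ∀ b, z b ∈ unitary (H →L[ℂ] H))
    (hz_cocycle : ∀ c : TwoSimplex P, z c.d0 * z c.d2 = z c.d1) :
    (∀ (a₀ a₁ : P) (p q : List (OneSimplex P)), IsPath a₀ p a₁ → IsPath a₀ q a₁ →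
      Homotopic p q → zEval z p = zEval z q) ∧
    (∀ a : P, z (degenSimplex a) = 1) ∧
    (∀ (a₀ a₁ : P) (p : List (OneSimplex P)), IsPath a₀ p a₁ →
      zEval z (revPath p) = star (zEval z p)) := by

  -- (i)
  have hi : ∀ p q : List (OneSimplex P), Homotopic p q → zEval z p = zEval z q := by
    intro p q h
    induction h with
    | refl p => rfl
    | symm _ ih => exact ih.symm
    | trans _ _ ih1 ih2 => exact ih1.trans ih2
    | deform c l r =>
        simp only [zEval, List.map_append, List.prod_append, List.map_cons,
          List.map_nil, List.prod_cons, List.prod_nil, hz_cocycle c, mul_one, mul_assoc]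
  -- (ii)
  have hii : ∀ a : P, z (degenSimplex a) = 1 := by
    intro a
    have hc := hz_cocycle ⟨a, degenSimplex a, degenSimplex a, degenSimplex a,
      le_refl a, le_refl a, le_refl a, rfl, rfl, rfl⟩
    have := congrArg (fun x => star (z (degenSimplex a)) * x) hc
    simpa [← mul_assoc, Unitary.star_mul_self_of_mem (hz_unitary (degenSimplex a))]
      using this
  -- rev simplex
  have hrev : ∀ b : OneSimplex P, z (revSimplex b) = star (z b) := by
    intro b
    have hc := hz_cocycle ⟨b.supp, revSimplex b, degenSimplex b.e1, b,
      le_refl _, b.h1, le_refl _, rfl, rfl, rfl⟩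
    have h1 : z (revSimplex b) * z b = 1 := by rw [hc, hii]
    calc z (revSimplex b) = z (revSimplex b) * (z b * star (z b)) := by
          rw [Unitary.mul_star_self_of_mem (hz_unitary b), mul_one]
      _ = star (z b) := by rw [← mul_assoc, h1, one_mul]
  have hiii : ∀ p : List (OneSimplex P), zEval z (revPath p) = star (zEval z p) := by
    intro p
    induction p with
    | nil => simp [zEval, revPath]
    | cons b l ih =>
        have : revPath (b :: l) = revPath l ++ [revSimplex b] := by
          simp [revPath]
        rw [this]
        simp only [zEval, List.map_append, List.prod_append, List.map_cons,
          List.map_nil, List.prod_cons, List.prod_nil, mul_one] at *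
        rw [ih, hrev, star_mul]
  exact ⟨fun _ _ p q _ _ h => hi p q h, hii, fun _ _ p _ => hiii p⟩
end

section
/- Let θ_q ∈ (0, 2π) and m > 0. If a₀, b₀ ∈ ℝ and the sequence ψ_k := (k² + m²)^{-1/4}(a₀ + e^{ikθ_q} b₀), k ∈ ℤ, belongs to ℓ²(ℤ), then a₀ = b₀ = 0. -/
/-!
Since `|a₀ + e^{ikθ} b₀|² = a₀² + b₀² + 2 a₀ b₀ cos kθ`, square-summability of `ψ` says that
`∑ c_k (a₀² + b₀² + 2 a₀ b₀ cos kθ)` converges, where `c_k = (k² + m²)^{-1/2}` decreases to `0`.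
As `θ ≢ 0 mod 2π`, the partial sums of `cos kθ` are bounded, so `∑ c_k cos kθ` converges by
Dirichlet's test. Hence `(a₀² + b₀²) ∑ c_k` converges, and since `c_k ~ 1/k` this forces
`a₀² + b₀² = 0`.
-/

open Complex Filter Topology Finset

lemma norm_sq_ofReal_rpow_neg_one_div_four {x : ℝ} (hx : 0 ≤ x) :
    ‖((x ^ (-(1 / 4 : ℝ)) : ℝ) : ℂ)‖ ^ 2 = (√x)⁻¹ := by
  rw [norm_real, Real.norm_eq_abs, abs_of_nonneg (Real.rpow_nonneg hx _),
    ← Real.rpow_natCast, ← Real.rpow_mul hx, Real.sqrt_eq_rpow, ← Real.rpow_neg hx]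
  norm_num

lemma norm_sq_add_exp_I_mul (a b t : ℝ) :
    ‖(a + exp (I * t) * b : ℂ)‖ ^ 2 = a ^ 2 + b ^ 2 + 2 * a * b * Real.cos t := by
  have hexp : exp (I * t) = ⟨Real.cos t, Real.sin t⟩ := by
    rw [mul_comm, exp_mul_I]; apply Complex.ext <;> simp [← ofReal_cos, ← ofReal_sin]
  rw [hexp, Complex.sq_norm, normSq_apply]
  simp only [add_re, add_im, mul_re, mul_im, ofReal_re, ofReal_im]
  linear_combination b ^ 2 * Real.sin_sq_add_cos_sq t

lemma abs_sum_range_cos_mul_le {θ : ℝ} (hθ : Real.cos θ ≠ 1) (n : ℕ) :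
    |∑ i ∈ range n, Real.cos (i * θ)| ≤ 2 / ‖exp (θ * I) - 1‖ := by
  set w := exp (θ * I)
  have hw : w ≠ 1 := fun h => hθ (by simpa [w, exp_ofReal_mul_I_re] using congrArg re h)
  have hpow (i : ℕ) : w ^ i = exp ((i * θ : ℝ) * I) := by
    rw [← exp_nat_mul]; push_cast; ring_nf
  have hsum : ∑ i ∈ range n, Real.cos (i * θ) = (∑ i ∈ range n, w ^ i).re := by
    simp only [re_sum, hpow, exp_ofReal_mul_I_re]
  have hnum : ‖w ^ n - 1‖ ≤ 2 := by
    calc ‖w ^ n - 1‖ ≤ ‖w ^ n‖ + ‖(1 : ℂ)‖ := norm_sub_le _ _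
      _ = 2 := by rw [hpow, norm_exp_ofReal_mul_I]; norm_num
  calc |∑ i ∈ range n, Real.cos (i * θ)| ≤ ‖∑ i ∈ range n, w ^ i‖ := hsum ▸ abs_re_le_norm _
    _ = ‖w ^ n - 1‖ / ‖w - 1‖ := by rw [geom_sum_eq hw, norm_div]
    _ ≤ 2 / ‖w - 1‖ := by gcongr

lemma Antitone.cauchySeq_sum_range_mul_cos {c : ℕ → ℝ} (hc : Antitone c)
    (hc0 : Tendsto c atTop (𝓝 0)) {θ : ℝ} (hθ : Real.cos θ ≠ 1) :
    CauchySeq fun n => ∑ i ∈ range n, c i * Real.cos (i * θ) :=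
  hc.cauchySeq_series_mul_of_tendsto_zero_of_bounded hc0 (abs_sum_range_cos_mul_le hθ)

lemma Antitone.summable_of_summable_mul_add_cos {c : ℕ → ℝ} (hc : Antitone c)
    (hc0 : Tendsto c atTop (𝓝 0)) {θ : ℝ} (hθ : Real.cos θ ≠ 1) {A B : ℝ} (hA : A ≠ 0)
    (h : Summable fun n => c n * (A + B * Real.cos (n * θ))) : Summable c := by
  have hnonneg : ∀ n, 0 ≤ c n := fun n => hc.le_of_tendsto hc0 n
  obtain ⟨T, hT⟩ := cauchySeq_tendsto_of_complete (hc.cauchySeq_sum_range_mul_cos hc0 hθ)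
  have hsplit (n : ℕ) : ∑ i ∈ range n, c i =
      A⁻¹ * (∑ i ∈ range n, c i * (A + B * Real.cos (i * θ))
        - B * ∑ i ∈ range n, c i * Real.cos (i * θ)) := by
    rw [mul_sum, ← sum_sub_distrib, mul_sum]
    refine sum_congr rfl fun i _ => ?_
    field_simp
    ring
  have hlim : Tendsto (fun n => ∑ i ∈ range n, c i) atTop (𝓝 (A⁻¹ * (∑' n, c n *
      (A + B * Real.cos (n * θ)) - B * T))) := by
    simp only [hsplit]
    exact ((h.hasSum.tendsto_sum_nat).sub (hT.const_mul B)).const_mul _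
  exact ((hasSum_iff_tendsto_nat_of_nonneg hnonneg _).2 hlim).summable

lemma antitone_inv_sqrt_natCast_sq_add_sq {m : ℝ} (hm : m ≠ 0) :
    Antitone fun n : ℕ => (√((n : ℝ) ^ 2 + m ^ 2))⁻¹ := by
  intro k n hkn
  have hk : (k : ℝ) ≤ n := by exact_mod_cast hkn
  dsimp only
  gcongr

lemma tendsto_inv_sqrt_natCast_sq_add_sq (m : ℝ) :
    Tendsto (fun n : ℕ => (√((n : ℝ) ^ 2 + m ^ 2))⁻¹) atTop (𝓝 0) :=
  (Real.tendsto_sqrt_atTop.comp <| tendsto_atTop_add_const_right _ _ <|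
    (tendsto_pow_atTop two_ne_zero).comp tendsto_natCast_atTop_atTop).inv_tendsto_atTop

lemma not_summable_inv_sqrt_natCast_sq_add_sq (m : ℝ) :
    ¬ Summable fun n : ℕ => (√((n : ℝ) ^ 2 + m ^ 2))⁻¹ := by
  intro h
  refine Real.not_summable_natCast_inv ((h.mul_left (1 + |m|)).of_nonneg_of_le
    (fun n => by positivity) fun n => ?_)
  rcases n.eq_zero_or_pos with rfl | hn
  · simp only [Nat.cast_zero, inv_zero]
    positivity
  have hn : (1 : ℝ) ≤ n := by exact_mod_cast hn
  have hsqrt : √((n : ℝ) ^ 2 + m ^ 2) ≤ (1 + |m|) * n := by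
    rw [Real.sqrt_le_left (by positivity)]
    have hn2 : (0 : ℝ) ≤ n ^ 2 - 1 := by nlinarith
    nlinarith [sq_abs m, abs_nonneg m, mul_nonneg (sq_nonneg m) hn2]
  calc (n : ℝ)⁻¹ = (1 + |m|) * ((1 + |m|) * n)⁻¹ := by field_simp
    _ ≤ (1 + |m|) * (√((n : ℝ) ^ 2 + m ^ 2))⁻¹ := by gcongr

/-- If `θ_q ∈ (0, 2π)`, `m > 0` and the sequence
`ψ_k = (k² + m²)^(-1/4) (a₀ + e^{i k θ_q} b₀)`, `k ∈ ℤ`, is square-summable,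
then `a₀ = b₀ = 0`. -/
theorem char_sequence_not_l2 (θq m : ℝ) (hθ : θq ∈ Set.Ioo 0 (2 * Real.pi))
    (hm : 0 < m) (a₀ b₀ : ℝ)
    (ψ : ℤ → ℂ)
    (hψ : ∀ k : ℤ, ψ k =
      ((((k : ℝ) ^ 2 + m ^ 2) ^ (-(1 / 4 : ℝ)) : ℝ) : ℂ) *
        (a₀ + Complex.exp (Complex.I * k * θq) * b₀))
    (hsum : Summable fun k : ℤ => ‖ψ k‖ ^ 2) :
    a₀ = 0 ∧ b₀ = 0 := by
  have hcos : Real.cos θq ≠ 1 := fun h => hθ.1.ne' <|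
    (Real.cos_eq_one_iff_of_lt_of_lt (by linarith [hθ.1, Real.pi_pos]) hθ.2).1 h
  have hnorm (n : ℕ) : ‖ψ n‖ ^ 2 = (√((n : ℝ) ^ 2 + m ^ 2))⁻¹ *
      (a₀ ^ 2 + b₀ ^ 2 + 2 * a₀ * b₀ * Real.cos (n * θq)) := by
    rw [hψ, norm_mul, mul_pow, norm_sq_ofReal_rpow_neg_one_div_four (by positivity),
      show I * ((n : ℤ) : ℂ) * θq = I * ((n * θq : ℝ) : ℂ) by push_cast; ring,
      norm_sq_add_exp_I_mul]
    push_cast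
    ring
  have hA : a₀ ^ 2 + b₀ ^ 2 = 0 := by
    by_contra hA
    have hsumℕ := (hsum.comp_injective Nat.cast_injective).congr hnorm
    exact not_summable_inv_sqrt_natCast_sq_add_sq m <|
      (antitone_inv_sqrt_natCast_sq_add_sq hm.ne').summable_of_summable_mul_add_cos
        (tendsto_inv_sqrt_natCast_sq_add_sq m) hcos hA hsumℕ
  constructor <;> nlinarith [sq_nonneg a₀, sq_nonneg b₀]
end

section
/- Let θ_q ∈ (0, 2π), m > 0, N ∈ ℕ, and a_j, b_j ∈ ℝ for j = 0,...,N. If the sequence ψ̄_k := (k² + m²)^{-1/4} ∑_{j=0}^N (a_j + e^{ikθ_q} b_j)(ik)^j, k ∈ ℤ, belongs to ℓ²(ℤ), then a_j = b_j = 0 for all j. -/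
open Complex Filter Finset Topology

/-!
Let `M` be the largest index with `(a_M, b_M) ≠ 0`. After division by `(i n)^M` the lower-order
terms are `O(1/n)`, so for large `n` the quotient is `a_M + e^{i n θ_q} b_M + o(1)`. Because
`e^{i θ_q} ≠ 1`, this leading coefficient cannot be small at two consecutive `n` (when `b_M ≠ 0`
consecutive values differ by `b_M e^{i n θ_q} (e^{i θ_q} - 1)`), while
`|ψ̄_n|² ≥ |quotient|² / (n + m)` for `n ≥ 1`. Hence `|ψ̄_n|² + |ψ̄_{n+1}|² ≳ 1/n`, and `∑ |ψ̄_k|²`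
dominates the harmonic series.
-/

theorem exp_I_mul_ne_one_of_mem_Ioo {θ : ℝ} (hθ : θ ∈ Set.Ioo 0 (2 * Real.pi)) :
    exp (I * θ) ≠ 1 := by
  intro h
  obtain ⟨n, hn⟩ := exp_eq_one_iff.1 h
  have hθn : θ = n * (2 * Real.pi) := by simpa using congrArg im hn
  have hpos : (0 : ℝ) < n := pos_of_mul_pos_left (hθn ▸ hθ.1) Real.two_pi_pos.le
  have hlt : (n : ℝ) < 1 := (mul_lt_iff_lt_one_left Real.two_pi_pos).1 (hθn ▸ hθ.2)
  norm_cast at hpos hlt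
  omega

theorem exists_pos_le_norm_add_norm_succ {θ : ℝ} (hθ : exp (I * θ) ≠ 1) {a b : ℂ}
    (hab : a ≠ 0 ∨ b ≠ 0) : ∃ δ > 0, ∀ n : ℕ,
      δ ≤ ‖a + exp (I * n * θ) * b‖ + ‖a + exp (I * (n + 1 : ℕ) * θ) * b‖ := by
  by_cases hb : b = 0
  · refine ⟨2 * ‖a‖, by simpa [hb] using hab, fun n => by simp [hb, two_mul]⟩
  refine ⟨‖b‖ * ‖exp (I * θ) - 1‖,
    mul_pos (norm_pos_iff.2 hb) (norm_pos_iff.2 (sub_ne_zero.2 hθ)), fun n => ?_⟩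
  have hdiff : a + exp (I * (n + 1 : ℕ) * θ) * b - (a + exp (I * n * θ) * b) =
      exp (I * (n * θ : ℝ)) * (b * (exp (I * θ) - 1)) := by
    push_cast
    rw [show I * (n + 1) * θ = I * (n * θ) + I * θ by ring, exp_add]
    ring_nf
  calc ‖b‖ * ‖exp (I * θ) - 1‖
      = ‖a + exp (I * (n + 1 : ℕ) * θ) * b - (a + exp (I * n * θ) * b)‖ := by
        rw [hdiff, norm_mul, norm_exp_I_mul_ofReal, one_mul, norm_mul]
    _ ≤ _ := (norm_sub_le _ _).trans_eq (add_comm _ _)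

theorem tendsto_sum_mul_pow_div_pow_sub {𝕜 ι : Type*} [NormedField 𝕜] {l : Filter ι}
    {z : ι → 𝕜} (hz : Tendsto z l (Bornology.cobounded 𝕜)) {c : ℕ → ι → 𝕜}
    (hc : ∀ j, IsBoundedUnder (· ≤ ·) l (fun x => ‖c j x‖)) (M : ℕ) :
    Tendsto (fun x => (∑ j ∈ range (M + 1), c j x * z x ^ j) / z x ^ M - c M x) l (𝓝 0) := by
  have hz0 : ∀ᶠ x in l, z x ≠ 0 := hz.eventually_ne_cobounded 0
  have hinv : Tendsto (fun x => (z x)⁻¹) l (𝓝 0) := tendsto_inv₀_cobounded.comp hz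
  have hterm : ∀ j ∈ range M, Tendsto (fun x => c j x * (z x)⁻¹ ^ (M - j)) l (𝓝 0) := by
    intro j hj
    have hpow := hinv.pow (M - j)
    rw [zero_pow (Nat.sub_ne_zero_of_lt (mem_range.1 hj))] at hpow
    simpa [mul_comm] using hpow.zero_mul_isBoundedUnder_le (hc j)
  have hsum := tendsto_finsetSum _ hterm
  rw [sum_const_zero] at hsum
  refine hsum.congr' ?_
  filter_upwards [hz0] with x hx
  rw [sum_range_succ, add_div, mul_div_assoc, div_self (pow_ne_zero _ hx), mul_one,
    add_sub_cancel_right, sum_div]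
  refine sum_congr rfl fun j hj => ?_
  have hM : z x ^ M = z x ^ j * z x ^ (M - j) := by
    rw [← pow_add, Nat.add_sub_cancel' (mem_range.1 hj).le]
  rw [hM, inv_pow]
  field_simp [pow_ne_zero _ hx]

theorem not_summable_of_div_le_add_succ {f : ℕ → ℝ} {ε : ℝ} (hε : 0 < ε)
    (h : ∀ᶠ n in atTop, ε / n ≤ f n + f (n + 1)) : ¬ Summable f := by
  intro hf
  have hpair : Summable fun n => f n + f (n + 1) := hf.add ((summable_nat_add_iff 1).2 hf)
  have hharm : Summable fun n : ℕ => ε / n := hpair.of_norm_bounded_eventually_nat <| by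
    filter_upwards [h] with n hn
    rwa [Real.norm_of_nonneg (by positivity)]
  exact Real.not_summable_one_div_natCast <| by
    simpa [div_eq_mul_inv, hε.ne'] using hharm.mul_left ε⁻¹

theorem not_summable_of_sq_div_le {f g : ℕ → ℝ} {c δ : ℝ} (hc : 0 ≤ c) (hδ : 0 < δ)
    (hfg : ∀ᶠ n in atTop, g n ^ 2 / (n + c) ≤ f n) (hg : ∀ᶠ n in atTop, δ ≤ g n + g (n + 1)) :
    ¬ Summable f := by
  refine not_summable_of_div_le_add_succ (ε := δ ^ 2 / (2 * (2 + c))) (by positivity) ?_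
  filter_upwards [hfg, (tendsto_add_atTop_nat 1).eventually hfg, hg, eventually_ge_atTop 1]
    with n hfg₀ hfg₁ hg hn
  have hn' : (1 : ℝ) ≤ n := by exact_mod_cast hn
  have hsq : δ ^ 2 / 2 ≤ g n ^ 2 + g (n + 1) ^ 2 := by nlinarith [sq_nonneg (g n - g (n + 1))]
  push_cast at hfg₁
  calc δ ^ 2 / (2 * (2 + c)) / n = δ ^ 2 / 2 / ((2 + c) * n) := by field_simp
    _ ≤ (g n ^ 2 + g (n + 1) ^ 2) / ((2 + c) * n) := by gcongr
    _ = g n ^ 2 / ((2 + c) * n) + g (n + 1) ^ 2 / ((2 + c) * n) := add_div _ _ _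
    _ ≤ g n ^ 2 / (n + c) + g (n + 1) ^ 2 / (n + 1 + c) := by
        gcongr <;> nlinarith
    _ ≤ f n + f (n + 1) := add_le_add hfg₀ hfg₁

theorem eventually_le_norm_add_norm_succ {E : Type*} [SeminormedAddCommGroup E] {u v : ℕ → E}
    {δ δ' : ℝ} (hv : ∀ n, δ ≤ ‖v n‖ + ‖v (n + 1)‖)
    (huv : Tendsto (fun n => u n - v n) atTop (𝓝 0)) (hδ' : δ' < δ) :
    ∀ᶠ n in atTop, δ' ≤ ‖u n‖ + ‖u (n + 1)‖ := by
  have hsmall : ∀ᶠ n in atTop, ‖u n - v n‖ < (δ - δ') / 2 :=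
    (tendsto_order.1 huv.norm).2 _ (by simp; linarith)
  filter_upwards [hsmall, (tendsto_add_atTop_nat 1).eventually hsmall] with n h₀ h₁
  rw [norm_sub_rev] at h₀ h₁
  linarith [hv n, norm_le_norm_add_norm_sub' (v n) (u n),
    norm_le_norm_add_norm_sub' (v (n + 1)) (u (n + 1))]

theorem inv_add_le_rpow_neg_quarter_sq {x m : ℝ} (hx : 0 ≤ x) (hm : 0 < m) :
    (x + m)⁻¹ ≤ ((x ^ 2 + m ^ 2) ^ (-(1 / 4 : ℝ))) ^ 2 := by
  have hpos : 0 < x ^ 2 + m ^ 2 := by positivity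
  rw [← Real.rpow_natCast, ← Real.rpow_mul hpos.le,
    show -(1 / 4 : ℝ) * (2 : ℕ) = -(1 / 2) by norm_num, Real.rpow_neg hpos.le, ← Real.sqrt_eq_rpow]
  gcongr
  exact Real.sqrt_le_iff.2 ⟨by positivity, by nlinarith⟩

theorem norm_div_pow_sq_div_le {m : ℝ} (hm : 0 < m) {k : ℕ} (hk : 1 ≤ k) (P : ℂ) (M : ℕ) :
    ‖P / (I * k) ^ M‖ ^ 2 / (k + m) ≤
      ‖((((k : ℝ) ^ 2 + m ^ 2) ^ (-(1 / 4 : ℝ)) : ℝ) : ℂ) * P‖ ^ 2 := by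
  have hdiv : ‖P / (I * k) ^ M‖ ≤ ‖P‖ := by
    rw [norm_div, norm_pow, norm_mul, norm_I, one_mul, norm_natCast]
    exact div_le_self (norm_nonneg _) (one_le_pow₀ (by exact_mod_cast hk))
  calc ‖P / (I * k) ^ M‖ ^ 2 / (k + m) ≤ ‖P‖ ^ 2 * (k + m)⁻¹ := by
        rw [div_eq_mul_inv]; gcongr
    _ ≤ ‖P‖ ^ 2 * (((k : ℝ) ^ 2 + m ^ 2) ^ (-(1 / 4 : ℝ))) ^ 2 := by
        gcongr; exact inv_add_le_rpow_neg_quarter_sq (Nat.cast_nonneg k) hm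
    _ = _ := by rw [norm_mul, norm_real, Real.norm_of_nonneg (by positivity)]; ring

/-- If `θ_q ∈ (0, 2π)`, `m > 0` and the sequence
`ψ̄_k = (k² + m²)^(-1/4) ∑_{j=0}^N (a_j + e^{i k θ_q} b_j)(i k)^j`, `k ∈ ℤ`,
is square-summable, then all coefficients `a_j, b_j` vanish. -/
theorem delta_derivative_sequence_not_l2 (θq m : ℝ)
    (hθ : θq ∈ Set.Ioo 0 (2 * Real.pi)) (hm : 0 < m)
    (N : ℕ) (a b : ℕ → ℝ)
    (ψ : ℤ → ℂ)
    (hψ : ∀ k : ℤ, ψ k =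
      ((((k : ℝ) ^ 2 + m ^ 2) ^ (-(1 / 4 : ℝ)) : ℝ) : ℂ) *
        ∑ j ∈ Finset.range (N + 1),
          ((a j : ℂ) + Complex.exp (Complex.I * k * θq) * (b j : ℂ)) *
            (Complex.I * k) ^ j)
    (hsum : Summable fun k : ℤ => ‖ψ k‖ ^ 2) :
    ∀ j ≤ N, a j = 0 ∧ b j = 0 := by
  by_contra hne
  simp only [not_forall, not_and_or] at hne
  obtain ⟨j₀, hj₀N, hj₀⟩ := hne
  set nonzero : ℕ → Prop := fun j => a j ≠ 0 ∨ b j ≠ 0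
  set M := Nat.findGreatest nonzero N
  have hM : a M ≠ 0 ∨ b M ≠ 0 := Nat.findGreatest_spec (P := nonzero) hj₀N hj₀
  have hMN : M ≤ N := Nat.findGreatest_le N
  set c : ℕ → ℕ → ℂ := fun j n => a j + exp (I * n * θq) * b j
  have hψc : ∀ n : ℕ, ψ n = ((((n : ℝ) ^ 2 + m ^ 2) ^ (-(1 / 4 : ℝ)) : ℝ) : ℂ) *
      ∑ j ∈ range (M + 1), c j n * (I * n) ^ j := by
    intro n
    rw [hψ n]
    push_cast
    congr 1
    refine (sum_subset (range_subset_range.2 (by omega)) fun j hjN hjM => ?_).symm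
    obtain ⟨ha, hb⟩ := not_or.1 <|
      Nat.findGreatest_is_greatest (P := nonzero) (by simp at hjM; omega) (by simp at hjN; omega)
    simp [not_not.1 ha, not_not.1 hb]
  obtain ⟨δ, hδ, hcδ⟩ := exists_pos_le_norm_add_norm_succ (exp_I_mul_ne_one_of_mem_Ioo hθ)
    (a := a M) (b := b M) (by exact_mod_cast hM)
  have hc : ∀ j, IsBoundedUnder (· ≤ ·) atTop (fun n => ‖c j n‖) := fun j =>
    isBoundedUnder_of ⟨‖(a j : ℂ)‖ + ‖(b j : ℂ)‖, fun n => (norm_add_le _ _).trans_eq <| by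
      rw [norm_mul, ← ofReal_natCast, mul_assoc, ← ofReal_mul, norm_exp_I_mul_ofReal, one_mul]⟩
  have hIn : Tendsto (fun n : ℕ => I * n) atTop (Bornology.cobounded ℂ) :=
    tendsto_norm_atTop_iff_cobounded.1 (by simpa using tendsto_natCast_atTop_atTop)
  refine not_summable_of_sq_div_le hm.le (half_pos hδ) ?_
    (eventually_le_norm_add_norm_succ hcδ (tendsto_sum_mul_pow_div_pow_sub hIn hc M)
      (half_lt_self hδ)) (hsum.comp_injective Nat.cast_injective)
  filter_upwards [eventually_ge_atTop 1] with n hn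
  simpa [hψc n] using norm_div_pow_sq_div_le hm hn _ M
end
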